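/- arXiv:1507.00694 — 4 statements merged into one kernel-verified Lean document; each statement's English description precedes it below -/
import Mathlib

section
/- Let 0 < β < 2 and let v : ℝ → ℝ be a 2π-periodic C² function, and set u(x) = v(x) + Λ^β v(x). If u(x) ≥ 0 for all x, then min_x v(x) ≥ min_x u(x) ≥ 0; in particular v(x) ≥ 0 and Λ^β v(x) ≤ u(x) for every x ∈ ℝ. -/
open MeasureTheory Real

/-- The constant `c_σ = Γ(1+σ) cos((1−σ)π/2) / π`. -/
noncomputable def cFrac (σ : ℝ) : ℝ :=
  Real.Gamma (1 + σ) * Real.cos ((1 - σ) * Real.pi / 2) / Real.pi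

/-- The periodized kernel `K_σ(η) = ∑_{k∈ℤ} |η + 2kπ|^{-(1+σ)}`. -/
noncomputable def Kper (σ η : ℝ) : ℝ :=
  ∑' k : ℤ, |η + 2 * (k : ℝ) * Real.pi| ^ (-(1 + σ))

/-- The fractional Laplacian `Λ^σ f` of a `2π`-periodic function, defined by
`Λ^σ f(x) = (c_σ/2) ∫_{-π}^{π} (2f(x) − f(x+η) − f(x−η)) K_σ(η) dη`. -/
noncomputable def fracLap (σ : ℝ) (f : ℝ → ℝ) (x : ℝ) : ℝ :=
  (cFrac σ / 2) *
    ∫ η in (-Real.pi)..Real.pi, (2 * f x - f (x + η) - f (x - η)) * Kper σ η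

theorem stmt0 (β : ℝ) (hβ0 : 0 < β) (hβ2 : β < 2)
    (v : ℝ → ℝ) (hv : ContDiff ℝ 2 v) (hvper : Function.Periodic v (2 * Real.pi))
    (u : ℝ → ℝ) (hu : ∀ x, u x = v x + fracLap β v x)
    (hupos : ∀ x, 0 ≤ u x) :
    (0 ≤ ⨅ y, u y) ∧ (∀ x, (⨅ y, u y) ≤ v x) ∧
      (∀ x, 0 ≤ v x) ∧ (∀ x, fracLap β v x ≤ u x) := by
  -- v attains its minimum
  have hcont : Continuous v := hv.continuous
  have hcpt : IsCompact (Set.range v) :=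
    hvper.compact_of_continuous (by positivity) hcont
  obtain ⟨m, hmmem, hmle⟩ := hcpt.exists_isLeast ⟨v 0, Set.mem_range_self 0⟩
  obtain ⟨x₀, hx₀⟩ := hmmem
  have hmin : ∀ x, v x₀ ≤ v x := fun x => hx₀ ▸ hmle (Set.mem_range_self x)
  -- cFrac β ≥ 0
  have hc : 0 ≤ cFrac β := by
    unfold cFrac
    have h1 : 0 < Real.Gamma (1 + β) := Real.Gamma_pos_of_pos (by linarith)
    have h2 : 0 ≤ Real.cos ((1 - β) * Real.pi / 2) := by
      apply le_of_lt
      apply Real.cos_pos_of_mem_Ioo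
      constructor
      · have : -Real.pi / 2 < (1 - β) * (Real.pi / 2) := by
          rw [div_lt_iff₀ (by positivity : (0:ℝ) < 2)] at *
          nlinarith [Real.pi_pos]
        linarith [this, (by ring : (1 - β) * (Real.pi / 2) = (1 - β) * Real.pi / 2)]
      · have : (1 - β) * (Real.pi / 2) < Real.pi / 2 := by
          nlinarith [Real.pi_pos]
        linarith [this, (by ring : (1 - β) * (Real.pi / 2) = (1 - β) * Real.pi / 2)]
    positivity
  -- Kper nonneg
  have hK : ∀ η, 0 ≤ Kper β η := fun η =>
    tsum_nonneg fun k => Real.rpow_nonneg (abs_nonneg _) _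
  -- fracLap at the minimum is ≤ 0
  have hfl : fracLap β v x₀ ≤ 0 := by
    unfold fracLap
    apply mul_nonpos_of_nonneg_of_nonpos (by linarith)
    have : (0:ℝ) ≤ ∫ η in (-Real.pi)..Real.pi,
        -((2 * v x₀ - v (x₀ + η) - v (x₀ - η)) * Kper β η) := by
      apply intervalIntegral.integral_nonneg (by linarith [Real.pi_pos])
      intro η _
      have h1 : 2 * v x₀ - v (x₀ + η) - v (x₀ - η) ≤ 0 := by
        have := hmin (x₀ + η); have := hmin (x₀ - η); linarith
      have := mul_nonpos_of_nonpos_of_nonneg h1 (hK η)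
      linarith
    rw [intervalIntegral.integral_neg] at this
    linarith
  have hux₀ : u x₀ ≤ v x₀ := by rw [hu x₀]; linarith
  -- infimum facts
  have hinf0 : 0 ≤ ⨅ y, u y := le_ciInf hupos
  have hbdd : BddBelow (Set.range u) := ⟨0, by rintro _ ⟨y, rfl⟩; exact hupos y⟩
  have hinfle : ∀ x, (⨅ y, u y) ≤ v x := fun x =>
    le_trans (le_trans (ciInf_le hbdd x₀) hux₀) (hmin x)
  refine ⟨hinf0, hinfle, fun x => le_trans hinf0 (hinfle x), fun x => ?_⟩
  have hvx : 0 ≤ v x := le_trans hinf0 (hinfle x)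
  have := hu x
  linarith
end

section
/- Let 0 < β < 2 and let v : ℝ → ℝ be a 2π-periodic C² function, and set u(x) = v(x) + Λ^β v(x). If u(x) ≥ 0 for all x, then 0 ≤ v(x) ≤ max_x u(x) for every x ∈ ℝ; in particular sup_x |v(x)| ≤ sup_x |u(x)|. -/
open MeasureTheory Real

theorem cFrac_pos {σ : ℝ} (h0 : 0 < σ) (h2 : σ < 2) : 0 < cFrac σ := by
  have hcos : 0 < cos ((1 - σ) * π / 2) :=
    cos_pos_of_mem_Ioo ⟨by nlinarith [pi_pos], by nlinarith [pi_pos]⟩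
  exact div_pos (mul_pos (Gamma_pos_of_pos (by linarith)) hcos) pi_pos

theorem Kper_nonneg (σ η : ℝ) : 0 ≤ Kper σ η :=
  tsum_nonneg fun _ => rpow_nonneg (abs_nonneg _) _

theorem summable_abs_add_two_mul_int_mul_pi_rpow {σ : ℝ} (hσ : 0 < σ) (η : ℝ) :
    Summable fun k : ℤ => |η + 2 * (k : ℝ) * π| ^ (-(1 + σ)) := by
  have h2π : (0 : ℝ) < 2 * π := by positivity
  have base := (summable_one_div_int_add_rpow (η / (2 * π)) (1 + σ)).mpr (by linarith)
  refine (base.mul_left ((2 * π) ^ (-(1 + σ)))).congr fun k => ?_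
  have hx : η + 2 * (k : ℝ) * π = 2 * π * (k + η / (2 * π)) := by field_simp; ring
  rw [hx, abs_mul, abs_of_pos h2π, mul_rpow h2π.le (abs_nonneg _), rpow_neg (abs_nonneg _),
    one_div]

-- Only the `k = 0` term is singular; for `k ≠ 0` we have `|η + 2kπ| ≥ π |k|`.
theorem exists_Kper_le {σ : ℝ} (hσ : 0 < σ) :
    ∃ T, 0 ≤ T ∧ ∀ η, |η| ≤ π → Kper σ η ≤ |η| ^ (-(1 + σ)) + T := by
  refine ⟨π ^ (-(1 + σ)) * ∑' k : ℤ, |(k : ℝ)| ^ (-(1 + σ)),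
    mul_nonneg (rpow_nonneg pi_pos.le _) (tsum_nonneg fun _ => rpow_nonneg (abs_nonneg _) _),
    fun η hη => ?_⟩
  have hs := summable_abs_add_two_mul_int_mul_pi_rpow hσ η
  rw [Kper, hs.tsum_eq_add_tsum_ite 0, ← tsum_mul_left]
  refine add_le_add (by norm_num) (Summable.tsum_le_tsum (fun k => ?_)
    (hs.summable_of_eq_zero_or_self fun k => by by_cases h : k = 0 <;> simp [h])
    ((summable_abs_int_rpow (by linarith)).mul_left _))
  split_ifs with hk
  · positivity
  have hk1 : (1 : ℝ) ≤ |(k : ℝ)| := by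
    rw [← Int.cast_abs]; exact_mod_cast Int.one_le_abs hk
  have hle : π * |(k : ℝ)| ≤ |η + 2 * (k : ℝ) * π| := by
    have := abs_sub_abs_le_abs_sub (2 * (k : ℝ) * π) (-η)
    rw [sub_neg_eq_add, add_comm, abs_neg, abs_mul, abs_mul, abs_two, abs_of_pos pi_pos] at this
    nlinarith [pi_pos]
  calc |η + 2 * (k : ℝ) * π| ^ (-(1 + σ)) ≤ (π * |(k : ℝ)|) ^ (-(1 + σ)) :=
        rpow_le_rpow_of_nonpos (by positivity) hle (by linarith)
    _ = π ^ (-(1 + σ)) * |(k : ℝ)| ^ (-(1 + σ)) := mul_rpow pi_pos.le (abs_nonneg _)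

theorem intervalIntegrable_abs_rpow {r : ℝ} (hr : -1 < r) (a b : ℝ) :
    IntervalIntegrable (fun x => |x| ^ r) volume a b := by
  have hpos : ∀ c, 0 ≤ c → IntervalIntegrable (fun x => |x| ^ r) volume 0 c := fun c hc =>
    (intervalIntegral.intervalIntegrable_rpow' hr).congr fun x hx => by
      rw [Set.uIoc_of_le hc] at hx
      simp only [abs_of_pos hx.1]
  have h0 : ∀ c, IntervalIntegrable (fun x => |x| ^ r) volume 0 c := by
    intro c
    rcases le_total 0 c with hc | hc
    · exact hpos c hc
    · simpa only [abs_neg, neg_zero, neg_neg] using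
        (IntervalIntegrable.iff_comp_neg (by simp)).mp (hpos (-c) (by linarith))
  exact (h0 a).symm.trans (h0 b)

theorem sq_mul_abs_rpow_neg_le (σ η : ℝ) :
    η ^ 2 * |η| ^ (-(1 + σ)) ≤ |η| ^ (1 - σ) := by
  rcases eq_or_ne η 0 with rfl | hη
  · rw [sq, zero_mul, zero_mul]
    positivity
  · rw [← sq_abs, ← rpow_two, ← rpow_add (abs_pos.mpr hη), show 2 + -(1 + σ) = 1 - σ by ring]

theorem abs_two_mul_sub_sub_le {f : ℝ → ℝ} (hf : Differentiable ℝ f)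
    (hf' : Differentiable ℝ (deriv f)) {L : ℝ} (hL : ∀ t, |deriv (deriv f) t| ≤ L) (x η : ℝ) :
    |2 * f x - f (x + η) - f (x - η)| ≤ 2 * L * η ^ 2 := by
  have hlip : ∀ a b, |deriv f a - deriv f b| ≤ L * |a - b| := fun a b => by
    simpa only [Real.norm_eq_abs] using convex_univ.norm_image_sub_le_of_norm_deriv_le
      (fun t _ => hf' t) (fun t _ => hL t) (Set.mem_univ b) (Set.mem_univ a)
  set g : ℝ → ℝ := fun t => f (x + t) + f (x - t)
  have hg : ∀ t, HasDerivAt g (deriv f (x + t) - deriv f (x - t)) t := fun t => by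
    rw [sub_eq_add_neg]
    exact ((hf _).hasDerivAt.comp_const_add x t).fun_add ((hf _).hasDerivAt.comp_const_sub x t)
  have hbound : ∀ t ∈ Set.Icc (-|η|) |η|, ‖deriv f (x + t) - deriv f (x - t)‖ ≤ 2 * L * |η| :=
    fun t ht => by
      have := hlip (x + t) (x - t)
      rw [show x + t - (x - t) = 2 * t by ring, abs_mul, abs_two] at this
      have hL0 : 0 ≤ L := (abs_nonneg _).trans (hL 0)
      rw [Real.norm_eq_abs]
      nlinarith [abs_le.mpr ht]
  have key := (convex_Icc (-|η|) |η|).norm_image_sub_le_of_norm_hasDerivWithin_le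
    (fun t _ => (hg t).hasDerivWithinAt) hbound
    ⟨neg_nonpos.mpr (abs_nonneg η), abs_nonneg η⟩
    ⟨neg_abs_le η, le_abs_self η⟩
  calc |2 * f x - f (x + η) - f (x - η)| = ‖g η - g 0‖ := by
        rw [Real.norm_eq_abs, ← abs_neg]; simp only [g, add_zero, sub_zero]; ring_nf
    _ ≤ 2 * L * |η| * ‖η - 0‖ := key
    _ = 2 * L * η ^ 2 := by rw [sub_zero, Real.norm_eq_abs, mul_assoc, abs_mul_abs_self, sq]

theorem Function.Periodic.deriv {f : ℝ → ℝ} {c : ℝ} (h : Function.Periodic f c) :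
    Function.Periodic (deriv f) c := fun x => by
  rw [← deriv_comp_add_const, show (fun y => f (y + c)) = f from funext h]

theorem exists_abs_two_mul_sub_sub_le_of_periodic {f : ℝ → ℝ} {c : ℝ}
    (hp : Function.Periodic f c) (hc : c ≠ 0) (hf : ContDiff ℝ 2 f) :
    ∃ A, ∀ x η, |2 * f x - f (x + η) - f (x - η)| ≤ A * η ^ 2 := by
  have hf'' : Continuous (deriv (deriv f)) := (hf.iterate_deriv' 0 2).continuous
  obtain ⟨L, hL⟩ := isBounded_iff_forall_norm_le.mp
    (hp.deriv.deriv.isBounded_of_continuous hc hf'')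
  exact ⟨2 * L, abs_two_mul_sub_sub_le (hf.differentiable (by norm_num))
    ((hf.iterate_deriv' 1 1).differentiable (by norm_num)) fun t => hL _ ⟨t, rfl⟩⟩

theorem Function.Periodic.exists_forall_le {α : Type*} [LinearOrder α] [TopologicalSpace α]
    [ClosedIicTopology α] {f : ℝ → α} {c : ℝ} (hp : Function.Periodic f c)
    (hc : c ≠ 0) (hf : Continuous f) : ∃ x₀, ∀ y, f x₀ ≤ f y := by
  obtain ⟨_, ⟨x₀, rfl⟩, hmin⟩ :=
    (hp.compact_of_continuous hc hf).exists_isLeast (Set.range_nonempty f)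
  exact ⟨x₀, fun y => hmin ⟨y, rfl⟩⟩

theorem Function.Periodic.exists_forall_ge {α : Type*} [LinearOrder α] [TopologicalSpace α]
    [ClosedIciTopology α] {f : ℝ → α} {c : ℝ} (hp : Function.Periodic f c)
    (hc : c ≠ 0) (hf : Continuous f) : ∃ x₁, ∀ y, f y ≤ f x₁ := by
  obtain ⟨_, ⟨x₁, rfl⟩, hmax⟩ :=
    (hp.compact_of_continuous hc hf).exists_isGreatest (Set.range_nonempty f)
  exact ⟨x₁, fun y => hmax ⟨y, rfl⟩⟩

theorem fracLap_nonneg_of_forall_le {σ : ℝ} (hc : 0 ≤ cFrac σ) {f : ℝ → ℝ} {x : ℝ}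
    (hmax : ∀ y, f y ≤ f x) : 0 ≤ fracLap σ f x :=
  mul_nonneg (by linarith) <| intervalIntegral.integral_nonneg (by linarith [pi_pos])
    fun η _ => mul_nonneg (by linarith [hmax (x + η), hmax (x - η)]) (Kper_nonneg σ η)

theorem fracLap_nonpos_of_forall_ge {σ : ℝ} (hc : 0 ≤ cFrac σ) {f : ℝ → ℝ} {x : ℝ}
    (hmin : ∀ y, f x ≤ f y) : fracLap σ f x ≤ 0 := by
  have h := intervalIntegral.integral_nonneg (μ := volume) (by linarith [pi_pos] : -π ≤ π)
    fun η _ => neg_nonneg.mpr <| mul_nonpos_of_nonpos_of_nonneg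
      (by linarith [hmin (x + η), hmin (x - η)] : 2 * f x - f (x + η) - f (x - η) ≤ 0)
      (Kper_nonneg σ η)
  rw [intervalIntegral.integral_neg, neg_nonneg] at h
  exact mul_nonpos_of_nonneg_of_nonpos (by linarith) h

theorem exists_abs_fracLap_le {σ : ℝ} (hσ0 : 0 < σ) (hσ2 : σ < 2) {f : ℝ → ℝ} {A : ℝ}
    (hf : ∀ x η, |2 * f x - f (x + η) - f (x - η)| ≤ A * η ^ 2) :
    ∃ C, ∀ x, |fracLap σ f x| ≤ C := by
  obtain ⟨T, hT0, hT⟩ := exists_Kper_le hσ0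
  have hA : 0 ≤ A := by simpa using (abs_nonneg _).trans (hf 0 1)
  set g : ℝ → ℝ := fun η => A * (|η| ^ (1 - σ) + T * η ^ 2)
  have hg : IntervalIntegrable g volume (-π) π :=
    ((intervalIntegrable_abs_rpow (by linarith) _ _).add
      (((continuous_pow 2).intervalIntegrable _ _).const_mul T)).const_mul A
  refine ⟨|cFrac σ / 2| * ∫ η in -π..π, g η, fun x => ?_⟩
  rw [fracLap, abs_mul, ← Real.norm_eq_abs (∫ _ in _.._, _)]
  refine mul_le_mul_of_nonneg_left (intervalIntegral.norm_integral_le_of_norm_le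
    (by linarith [pi_pos]) (ae_of_all _ fun η hη => ?_) hg) (abs_nonneg _)
  have hη : |η| ≤ π := abs_le.mpr ⟨hη.1.le, hη.2⟩
  calc ‖(2 * f x - f (x + η) - f (x - η)) * Kper σ η‖
      = |2 * f x - f (x + η) - f (x - η)| * Kper σ η := by
        rw [Real.norm_eq_abs, abs_mul, abs_of_nonneg (Kper_nonneg σ η)]
    _ ≤ A * η ^ 2 * (|η| ^ (-(1 + σ)) + T) :=
        mul_le_mul (hf x η) (hT η hη) (Kper_nonneg σ η) (by positivity)
    _ = A * (η ^ 2 * |η| ^ (-(1 + σ)) + T * η ^ 2) := by ring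
    _ ≤ A * (|η| ^ (1 - σ) + T * η ^ 2) := by gcongr; exact sq_mul_abs_rpow_neg_le σ η

theorem stmt1 (β : ℝ) (hβ0 : 0 < β) (hβ2 : β < 2)
    (v : ℝ → ℝ) (hv : ContDiff ℝ 2 v) (hvper : Function.Periodic v (2 * Real.pi))
    (u : ℝ → ℝ) (hu : ∀ x, u x = v x + fracLap β v x)
    (hupos : ∀ x, 0 ≤ u x) :
    (∀ x, 0 ≤ v x ∧ v x ≤ ⨆ y, u y) ∧ (∀ x, |v x| ≤ ⨆ y, |u y|) := by
  have h2π : 2 * π ≠ 0 := by positivity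
  have hc : 0 ≤ cFrac β := (cFrac_pos hβ0 hβ2).le
  obtain ⟨x₀, hx₀⟩ := hvper.exists_forall_le h2π hv.continuous
  obtain ⟨x₁, hx₁⟩ := hvper.exists_forall_ge h2π hv.continuous
  obtain ⟨A, hA⟩ := exists_abs_two_mul_sub_sub_le_of_periodic hvper h2π hv
  obtain ⟨C, hC⟩ := exists_abs_fracLap_le hβ0 hβ2 hA
  have hv_nonneg : ∀ x, 0 ≤ v x := fun x => by
    linarith [hupos x₀, hu x₀, fracLap_nonpos_of_forall_ge hc hx₀, hx₀ x]
  have hu_bdd : BddAbove (Set.range u) := ⟨v x₁ + C, by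
    rintro _ ⟨x, rfl⟩
    linarith [hu x, hx₁ x, le_abs_self (fracLap β v x), hC x]⟩
  have hv_le : ∀ x, v x ≤ ⨆ y, u y := fun x =>
    calc v x ≤ v x₁ := hx₁ x
      _ ≤ u x₁ := by linarith [hu x₁, fracLap_nonneg_of_forall_le hc hx₁]
      _ ≤ ⨆ y, u y := le_ciSup hu_bdd x₁
  refine ⟨fun x => ⟨hv_nonneg x, hv_le x⟩, fun x => ?_⟩
  simpa only [abs_of_nonneg (hv_nonneg x), abs_of_nonneg (hupos _)] using hv_le x
end

section
/- Let 0 < α < 2 and θ ∈ (0,1). There exists a constant C₀ = C₀(α,θ) > 0 with the following property: for every continuous 2π-periodic function u : ℝ → ℝ with primitive U(x) = ∫_0^x u(z) dz, and every D > 0 such that |U(a) − U(b)| ≤ D |a−b|^θ whenever |a−b| ≤ π, one has for all 0 < R ≤ L ≤ π and all x ∈ ℝ: | ∫_{R < |y| ≤ L} u(x−y) |y|^{−(1+α)} dy | ≤ C₀ D ( R^{−(1+α−θ)} + L^{−(1+α−θ)} ). -/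
open MeasureTheory Real

theorem stmt12 (α θ : ℝ) (hα0 : 0 < α) (hα2 : α < 2) (hθ0 : 0 < θ) (hθ1 : θ < 1) :
    ∃ C₀ : ℝ, 0 < C₀ ∧
      ∀ u : ℝ → ℝ, Continuous u → Function.Periodic u (2 * Real.pi) →
      ∀ D : ℝ, 0 < D →
      (∀ a b : ℝ, |a - b| ≤ Real.pi →
        |(∫ z in (0:ℝ)..a, u z) - ∫ z in (0:ℝ)..b, u z| ≤ D * |a - b| ^ θ) →
      ∀ R L x : ℝ, 0 < R → R ≤ L → L ≤ Real.pi →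
        |∫ y in {y : ℝ | R < |y| ∧ |y| ≤ L}, u (x - y) / |y| ^ (1 + α)|
          ≤ C₀ * D * (R ^ (-(1 + α - θ)) + L ^ (-(1 + α - θ))) := by
  have hexp : 0 < 1 + α - θ := by linarith
  refine ⟨2 + 2 * (1 + α) / (1 + α - θ), by positivity, ?_⟩
  intro u hu hper D hD hHol R L x hR hRL hLπ
  have hL : 0 < L := lt_of_lt_of_le hR hRL
  have hπ : 0 < Real.pi := Real.pi_pos
  -- the integrand
  set f : ℝ → ℝ := fun y => u (x - y) / |y| ^ (1 + α) with hf
  have hfc : ContinuousOn f {y : ℝ | y ≠ 0} := by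
    apply ContinuousOn.div
    · exact (hu.comp (continuous_const.sub continuous_id)).continuousOn
    · exact (Continuous.rpow_const continuous_abs (fun _ => Or.inr (by linarith))).continuousOn
    · intro y hy
      have : 0 < |y| := abs_pos.mpr hy
      positivity
  -- split the set integral
  have hSeq : {y : ℝ | R < |y| ∧ |y| ≤ L} = Set.Ico (-L) (-R) ∪ Set.Ioc R L := by
    ext y
    simp only [Set.mem_setOf_eq, Set.mem_union, Set.mem_Ico, Set.mem_Ioc, lt_abs, abs_le]
    constructor
    · rintro ⟨(h1 | h1), h2, h3⟩
      · right; exact ⟨h1, h3⟩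
      · left; exact ⟨h2, by linarith⟩
    · rintro (⟨h1, h2⟩ | ⟨h1, h2⟩)
      · exact ⟨Or.inr (by linarith), h1, by linarith⟩
      · exact ⟨Or.inl h1, by linarith, h2⟩
  have hInt1 : IntegrableOn f (Set.Ico (-L) (-R)) := by
    apply (ContinuousOn.integrableOn_Icc (hfc.mono ?_)).mono_set Set.Ico_subset_Icc_self
    intro y hy
    simp only [Set.mem_Icc] at hy
    exact ne_of_lt (by linarith [hy.2] : y < 0)
  have hInt2 : IntegrableOn f (Set.Ioc R L) := by
    apply (ContinuousOn.integrableOn_Icc (hfc.mono ?_)).mono_set Set.Ioc_subset_Icc_self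
    intro y hy
    simp only [Set.mem_Icc] at hy
    exact ne_of_gt (lt_of_lt_of_le hR hy.1)
  have hdisj : Disjoint (Set.Ico (-L) (-R)) (Set.Ioc R L) := by
    rw [Set.disjoint_left]
    rintro y ⟨_, h2⟩ ⟨h3, _⟩
    linarith
  have hsplit : (∫ y in {y : ℝ | R < |y| ∧ |y| ≤ L}, f y)
      = (∫ y in Set.Ico (-L) (-R), f y) + ∫ y in Set.Ioc R L, f y := by
    rw [hSeq]
    exact setIntegral_union hdisj measurableSet_Ioc hInt1 hInt2
  -- rewrite as interval integrals
  have h1 : (∫ y in Set.Ico (-L) (-R), f y) = ∫ y in R..L, f (-y) := by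
    rw [MeasureTheory.integral_Ico_eq_integral_Ioo, ← MeasureTheory.integral_Ioc_eq_integral_Ioo,
      ← intervalIntegral.integral_of_le (by linarith : -L ≤ -R),
      ← intervalIntegral.integral_comp_neg]
  have h2 : (∫ y in Set.Ioc R L, f y) = ∫ y in R..L, f y := by
    rw [intervalIntegral.integral_of_le hRL]
  -- the symmetrized integrand
  set g : ℝ → ℝ := fun y => u (x - y) + u (x + y) with hg
  have hgc : Continuous g := by
    exact (hu.comp (continuous_const.sub continuous_id)).add
      (hu.comp (continuous_const.add continuous_id))
  set φ : ℝ → ℝ := fun y => y ^ (-(1 + α)) with hφ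
  have hint2 : IntervalIntegrable f volume R L := by
    apply ContinuousOn.intervalIntegrable
    apply hfc.mono
    rw [Set.uIcc_of_le hRL]
    intro y hy
    exact ne_of_gt (lt_of_lt_of_le hR hy.1)
  have hint1 : IntervalIntegrable (fun y => f (-y)) volume R L := by
    apply ContinuousOn.intervalIntegrable
    apply ContinuousOn.comp hfc continuous_neg.continuousOn
    rw [Set.uIcc_of_le hRL]
    intro y hy
    exact ne_of_lt (by simp only [Set.mem_Icc] at hy; linarith [hy.1] : -y < 0)
  have hcomb : (∫ y in R..L, f (-y)) + (∫ y in R..L, f y) = ∫ y in R..L, g y * φ y := by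
    rw [← intervalIntegral.integral_add hint1 hint2]
    apply intervalIntegral.integral_congr
    intro y hy
    rw [Set.uIcc_of_le hRL] at hy
    have hy0 : 0 < y := lt_of_lt_of_le hR hy.1
    simp only [hf, hφ, hg, abs_neg, abs_of_pos hy0, sub_neg_eq_add]
    rw [Real.rpow_neg hy0.le]
    ring
  -- the primitive of g starting from R
  set F : ℝ → ℝ := fun y => ∫ z in R..y, g z with hFdef
  have hF' : ∀ y : ℝ, HasDerivAt F (g y) y := fun y =>
    intervalIntegral.integral_hasDerivAt_right (hgc.intervalIntegrable R y)
      hgc.aestronglyMeasurable.stronglyMeasurableAtFilter hgc.continuousAt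
  have hFc : Continuous F := by
    rw [continuous_iff_continuousAt]; exact fun y => (hF' y).continuousAt
  -- derivative of φ
  set φ' : ℝ → ℝ := fun y => -(1 + α) * y ^ (-(1 + α) - 1) with hφ'def
  have hφ' : ∀ y ∈ Set.uIcc R L, HasDerivAt φ (φ' y) y := by
    intro y hy
    rw [Set.uIcc_of_le hRL] at hy
    exact Real.hasDerivAt_rpow_const (Or.inl (ne_of_gt (lt_of_lt_of_le hR hy.1)))
  have hφ'c : ContinuousOn φ' (Set.uIcc R L) := by
    apply ContinuousOn.mul continuousOn_const
    apply ContinuousOn.rpow_const continuousOn_id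
    intro y hy
    rw [Set.uIcc_of_le hRL] at hy
    exact Or.inl (ne_of_gt (lt_of_lt_of_le hR hy.1))
  -- integration by parts
  have hIBP : (∫ y in R..L, g y * φ y)
      = F L * φ L - ∫ y in R..L, F y * φ' y := by
    have := intervalIntegral.integral_mul_deriv_eq_deriv_mul
      (fun y hy => hF' y) hφ' (hgc.intervalIntegrable R L) (hφ'c.intervalIntegrable)
    have hFR : F R = 0 := intervalIntegral.integral_same
    rw [hFR] at this
    -- this : ∫ y in R..L, F y * φ' y = F L * φ L - 0 * φ R - ∫ y in R..L, g y * φ y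
    have h := this
    linarith [h]
  -- Hölder bound on F
  have hFle : ∀ y ∈ Set.Icc R L, |F y| ≤ 2 * D * y ^ θ := by
    intro y hy
    simp only [Set.mem_Icc] at hy
    have hy0 : 0 < y := lt_of_lt_of_le hR hy.1
    have hsub : ∀ a b : ℝ, (∫ z in a..b, u z)
        = (∫ z in (0:ℝ)..b, u z) - (∫ z in (0:ℝ)..a, u z) := by
      intro a b
      rw [intervalIntegral.integral_interval_sub_left (hu.intervalIntegrable 0 b)
        (hu.intervalIntegrable 0 a)]
    have hI1 : (∫ z in R..y, u (x - z)) = ∫ z in x - y..x - R, u z :=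
      intervalIntegral.integral_comp_sub_left u x
    have hI2 : (∫ z in R..y, u (x + z)) = ∫ z in x + R..x + y, u z :=
      intervalIntegral.integral_comp_add_left u x
    have hyRπ : |y - R| ≤ Real.pi := by
      rw [abs_of_nonneg (by linarith)]; linarith
    have hb1 : |∫ z in x - y..x - R, u z| ≤ D * (y - R) ^ θ := by
      rw [hsub]
      have := hHol (x - R) (x - y) (by
        have : (x - R) - (x - y) = y - R := by ring
        rw [this]; exact hyRπ)
      have he : (x - R) - (x - y) = y - R := by ring
      rw [he, abs_of_nonneg (by linarith : (0:ℝ) ≤ y - R)] at this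
      exact this
    have hb2 : |∫ z in x + R..x + y, u z| ≤ D * (y - R) ^ θ := by
      rw [hsub]
      have := hHol (x + y) (x + R) (by
        have : (x + y) - (x + R) = y - R := by ring
        rw [this]; exact hyRπ)
      have he : (x + y) - (x + R) = y - R := by ring
      rw [he, abs_of_nonneg (by linarith : (0:ℝ) ≤ y - R)] at this
      exact this
    have hpow : (y - R) ^ θ ≤ y ^ θ :=
      Real.rpow_le_rpow (by linarith) (by linarith) hθ0.le
    have hc1 : Continuous fun z : ℝ => u (x - z) :=
      hu.comp (continuous_const.sub continuous_id)
    have hc2 : Continuous fun z : ℝ => u (x + z) :=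
      hu.comp (continuous_const.add continuous_id)
    have hFy : F y = (∫ z in x - y..x - R, u z) + ∫ z in x + R..x + y, u z := by
      simp only [hFdef, hg]
      rw [intervalIntegral.integral_add (hc1.intervalIntegrable R y)
        (hc2.intervalIntegrable R y), hI1, hI2]
    rw [hFy]
    calc |(∫ z in x - y..x - R, u z) + ∫ z in x + R..x + y, u z|
        ≤ |∫ z in x - y..x - R, u z| + |∫ z in x + R..x + y, u z| := abs_add_le _ _
      _ ≤ D * (y - R) ^ θ + D * (y - R) ^ θ := add_le_add hb1 hb2
      _ ≤ 2 * D * y ^ θ := by nlinarith [hpow, hD.le]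
  -- bound the boundary term
  have hFLφL : |F L * φ L| ≤ 2 * D * L ^ (θ - 1 - α) := by
    rw [abs_mul]
    have hφLpos : 0 < φ L := Real.rpow_pos_of_pos hL _
    rw [abs_of_pos hφLpos]
    calc |F L| * φ L ≤ (2 * D * L ^ θ) * φ L := by
          apply mul_le_mul_of_nonneg_right _ hφLpos.le
          exact hFle L ⟨hRL, le_refl L⟩
      _ = 2 * D * L ^ (θ - 1 - α) := by
          simp only [hφ]
          rw [mul_assoc, ← Real.rpow_add hL, show θ + -(1 + α) = θ - 1 - α by ring]
  -- bound the bulk term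
  have hbulk : |∫ y in R..L, F y * φ' y|
      ≤ 2 * D * (1 + α) / (1 + α - θ) * R ^ (θ - 1 - α) := by
    have hC1 : ContinuousOn (fun y => |F y * φ' y|) (Set.uIcc R L) :=
      ((hFc.continuousOn).mul hφ'c).abs
    have hC2 : ContinuousOn (fun y => 2 * D * (1 + α) * y ^ (θ - 2 - α)) (Set.uIcc R L) := by
      apply ContinuousOn.mul continuousOn_const
      apply ContinuousOn.rpow_const continuousOn_id
      intro y hy
      rw [Set.uIcc_of_le hRL] at hy
      exact Or.inl (ne_of_gt (lt_of_lt_of_le hR hy.1))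
    have hmono : (∫ y in R..L, |F y * φ' y|)
        ≤ ∫ y in R..L, 2 * D * (1 + α) * y ^ (θ - 2 - α) := by
      apply intervalIntegral.integral_mono_on hRL hC1.intervalIntegrable hC2.intervalIntegrable
      intro y hy
      have hy0 : 0 < y := lt_of_lt_of_le hR hy.1
      rw [abs_mul]
      have hφ'abs : |φ' y| = (1 + α) * y ^ (-(1 + α) - 1) := by
        simp only [hφ'def]
        rw [abs_mul, abs_of_nonpos (by linarith : -(1 + α) ≤ 0),
          abs_of_pos (Real.rpow_pos_of_pos hy0 _)]
        ring
      rw [hφ'abs]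
      calc |F y| * ((1 + α) * y ^ (-(1 + α) - 1))
          ≤ (2 * D * y ^ θ) * ((1 + α) * y ^ (-(1 + α) - 1)) := by
            apply mul_le_mul_of_nonneg_right (hFle y hy)
            positivity
        _ = 2 * D * (1 + α) * y ^ (θ - 2 - α) := by
            rw [show (θ - 2 - α) = θ + (-(1 + α) - 1) by ring, Real.rpow_add hy0]
            ring
      done
    have hval : (∫ y in R..L, y ^ (θ - 2 - α))
        ≤ R ^ (θ - 1 - α) / (1 + α - θ) := by
      rw [integral_rpow (Or.inr ⟨by intro h; linarith, by
        rw [Set.uIcc_of_le hRL]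
        intro h0
        exact absurd ((Set.mem_Icc.mp h0).1) (not_le.mpr hR)⟩)]
      rw [show θ - 2 - α + 1 = θ - 1 - α by ring]
      have hBpos : 0 < L ^ (θ - 1 - α) := Real.rpow_pos_of_pos hL _
      rw [show (θ - 1 - α) = -(1 + α - θ) by ring] at hBpos ⊢
      rw [div_neg, ← neg_div, neg_sub]
      gcongr
      linarith
    calc |∫ y in R..L, F y * φ' y| ≤ ∫ y in R..L, |F y * φ' y| :=
          intervalIntegral.abs_integral_le_integral_abs hRL
      _ ≤ ∫ y in R..L, 2 * D * (1 + α) * y ^ (θ - 2 - α) := hmono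
      _ = 2 * D * (1 + α) * ∫ y in R..L, y ^ (θ - 2 - α) := by
          rw [← intervalIntegral.integral_const_mul]
      _ ≤ 2 * D * (1 + α) * (R ^ (θ - 1 - α) / (1 + α - θ)) := by
          apply mul_le_mul_of_nonneg_left hval (by positivity)
      _ = 2 * D * (1 + α) / (1 + α - θ) * R ^ (θ - 1 - α) := by ring
  -- put things together
  have hRe : R ^ (-(1 + α - θ)) = R ^ (θ - 1 - α) := by
    rw [show -(1 + α - θ) = θ - 1 - α by ring]
  have hLe : L ^ (-(1 + α - θ)) = L ^ (θ - 1 - α) := by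
    rw [show -(1 + α - θ) = θ - 1 - α by ring]
  have hRpos : 0 < R ^ (θ - 1 - α) := Real.rpow_pos_of_pos hR _
  have hLpos : 0 < L ^ (θ - 1 - α) := Real.rpow_pos_of_pos hL _
  rw [show (∫ y in {y : ℝ | R < |y| ∧ |y| ≤ L}, u (x - y) / |y| ^ (1 + α))
      = ∫ y in R..L, g y * φ y by rw [← hcomb, ← h1, ← h2]; exact hsplit]
  rw [hIBP, hRe, hLe]
  have hc : 0 < 2 * (1 + α) / (1 + α - θ) := by positivity
  calc |F L * φ L - ∫ y in R..L, F y * φ' y|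
      ≤ |F L * φ L| + |∫ y in R..L, F y * φ' y| := abs_sub _ _
    _ ≤ 2 * D * L ^ (θ - 1 - α) + 2 * D * (1 + α) / (1 + α - θ) * R ^ (θ - 1 - α) :=
        add_le_add hFLφL hbulk
    _ ≤ (2 + 2 * (1 + α) / (1 + α - θ)) * D * (R ^ (θ - 1 - α) + L ^ (θ - 1 - α)) := by
        have h2D : (0:ℝ) < 2 * D * R ^ (θ - 1 - α) := by positivity
        have hcD : (0:ℝ) < 2 * (1 + α) / (1 + α - θ) * D * L ^ (θ - 1 - α) := by positivity
        have hkey : (2 + 2 * (1 + α) / (1 + α - θ)) * D * (R ^ (θ - 1 - α) + L ^ (θ - 1 - α))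
            - (2 * D * L ^ (θ - 1 - α) + 2 * D * (1 + α) / (1 + α - θ) * R ^ (θ - 1 - α))
            = 2 * D * R ^ (θ - 1 - α) + 2 * (1 + α) / (1 + α - θ) * D * L ^ (θ - 1 - α) := by
          field_simp
          ring
        linarith [h2D, hcD, hkey]
end

section
/- Let 0 < α < 2 and s > 0 satisfy 1 − α < s/(2(s+1)), and set σ = (1 + α − s/(2(s+1)))/α, so that σ < 3. Then for every γ > 0, N > 0 and M > 0 there exists a constant C = C(α, s, γ, N, M) > 0 such that for every nonnegative continuous 2π-periodic function u : ℝ → ℝ with ∫_{−π}^{π} u ≤ N and ‖u‖_{L^{1+s}(𝕋)} ≤ M, and every x ∈ ℝ, one has I_α u(x) ≥ γ u(x)³ − C ( u(x)^σ + u(x) + 1 ). -/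
/-!
Put `a = u x`. Restricting the integral to `η ∈ (δ, π]`, where `K_α(η) ≥ η^{-(1+α)}`, and using
`(a - v)² ≥ a² - 2 a v`, the main term is `a² (δ^{-α} - π^{-α}) / α`, while Hölder's inequality
with the `L^{1+s}` bound (periodicity makes it independent of the shift by `x`) bounds the cross
term by a multiple of `a M δ^{-α - 1/(1+s)}`. Taking `δ = (E / a)^{1+s}` for a suitable constant
`E` makes the cross term a quarter of the main term, leaving a multiple of `a^{2 + (1+s) α}`,
which dominates `γ a³` for large `a` precisely because `(1+s) α > 1`; this is what the condition
`1 - α < s / (2(s+1))` gives. For bounded `a` the constant `C` absorbs `γ a³`.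
-/

open MeasureTheory Real

/-- `I_α u(x) = c_α ∫_{-π}^{π} (u(x) − u(x−η))² K_α(η) dη`, taken with values in `[0,∞]`
(the integrand is nonnegative). -/
noncomputable def IfracE (α : ℝ) (u : ℝ → ℝ) (x : ℝ) : ENNReal :=
  ENNReal.ofReal (cFrac α) *
    ∫⁻ η in Set.Ioc (-Real.pi) Real.pi, ENNReal.ofReal ((u x - u (x - η)) ^ 2 * Kper α η)

open Set Filter

lemma abs_rpow_neg_le_Kper {α : ℝ} (hα : 0 < α) (η : ℝ) : |η| ^ (-(1 + α)) ≤ Kper α η := by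
  have hsum : Summable fun k : ℤ => |η + 2 * (k : ℝ) * π| ^ (-(1 + α)) := by
    refine (((summable_one_div_int_add_rpow (η / (2 * π)) (1 + α)).2 (by linarith)).mul_left
      ((2 * π) ^ (-(1 + α)))).congr fun k => ?_
    have h2π : |2 * π| = 2 * π := abs_of_pos (by positivity)
    rw [one_div, ← rpow_neg (abs_nonneg _), ← h2π, ← mul_rpow (abs_nonneg _) (abs_nonneg _),
      ← abs_mul, h2π]
    congr 2
    field_simp
    ring
  simpa [Kper] using hsum.le_tsum 0 fun _ _ => rpow_nonneg (abs_nonneg _) _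

lemma cFrac_pos_s13 {α : ℝ} (hα0 : 0 < α) (hα2 : α < 2) : 0 < cFrac α := by
  refine div_pos (mul_pos (Gamma_pos_of_pos (by linarith)) (cos_pos_of_mem_Ioo ⟨?_, ?_⟩)) pi_pos
  · nlinarith [pi_pos]
  · nlinarith [pi_pos]

lemma ContinuousOn.memLp_restrict_Ioc {f : ℝ → ℝ} {a b : ℝ} (hf : ContinuousOn f (Icc a b))
    (p : ENNReal) : MemLp f p (volume.restrict (Ioc a b)) := by
  obtain ⟨C, hC⟩ := isCompact_Icc.exists_bound_of_continuousOn hf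
  exact MemLp.of_bound ((hf.mono Ioc_subset_Icc_self).aestronglyMeasurable measurableSet_Ioc) C
    (ae_restrict_of_forall_mem measurableSet_Ioc fun x hx => hC x (Ioc_subset_Icc_self hx))

lemma intervalIntegral_mul_le_Lp_mul_Lq_of_nonneg {f g : ℝ → ℝ} {a b p q : ℝ} (hab : a ≤ b)
    (hpq : p.HolderConjugate q) (hf : ContinuousOn f (Icc a b)) (hg : ContinuousOn g (Icc a b))
    (hf0 : ∀ x ∈ Icc a b, 0 ≤ f x) (hg0 : ∀ x ∈ Icc a b, 0 ≤ g x) :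
    ∫ x in a..b, f x * g x
      ≤ (∫ x in a..b, f x ^ p) ^ (1 / p) * (∫ x in a..b, g x ^ q) ^ (1 / q) := by
  simp only [intervalIntegral.integral_of_le hab]
  exact integral_mul_le_Lp_mul_Lq_of_nonneg hpq
    (ae_restrict_of_forall_mem measurableSet_Ioc fun x hx => hf0 x (Ioc_subset_Icc_self hx))
    (ae_restrict_of_forall_mem measurableSet_Ioc fun x hx => hg0 x (Ioc_subset_Icc_self hx))
    (hf.memLp_restrict_Ioc _) (hg.memLp_restrict_Ioc _)

lemma Function.Periodic.intervalIntegral_comp_sub_eq {f : ℝ → ℝ} {T : ℝ} (hf : f.Periodic T)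
    (a x : ℝ) : ∫ η in a..a + T, f (x - η) = ∫ y in a..a + T, f y := by
  rw [intervalIntegral.integral_comp_sub_left, ← hf.intervalIntegral_add_eq (x - (a + T)) a]
  ring_nf

lemma continuousOn_rpow_Icc {δ b : ℝ} (hδ : 0 < δ) (r : ℝ) :
    ContinuousOn (fun η : ℝ => η ^ r) (Icc δ b) :=
  continuousOn_id.rpow_const fun _ hη => Or.inl (hδ.trans_le hη.1).ne'

lemma integral_rpow_of_pos {δ b r : ℝ} (hδ : 0 < δ) (hδb : δ ≤ b) (hr : r ≠ -1) :
    ∫ η in δ..b, η ^ r = (b ^ (r + 1) - δ ^ (r + 1)) / (r + 1) :=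
  integral_rpow (Or.inr ⟨hr, by rw [uIcc_of_le hδb]; exact fun h => hδ.not_ge h.1⟩)

section Truncation

variable {α p q δ b : ℝ}

lemma integral_kernel_rpow_le (hpq : p.HolderConjugate q) (hα : 0 < α) (hδ : 0 < δ)
    (hδb : δ ≤ b) :
    (∫ η in δ..b, (η ^ (-(1 + α))) ^ q) ^ (1 / q)
      ≤ δ ^ (-(α + 1 / p)) / ((1 + α) * q - 1) ^ (1 / q) := by
  have hq := hpq.symm.lt
  set D := (1 + α) * q - 1 with hD_def
  have hD : 0 < D := by nlinarith
  have hrw : ∫ η in δ..b, (η ^ (-(1 + α))) ^ q = ∫ η in δ..b, η ^ (-D - 1) := by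
    refine intervalIntegral.integral_congr fun η hη => ?_
    rw [uIcc_of_le hδb] at hη
    rw [← rpow_mul (hδ.trans_le hη.1).le, hD_def]
    ring_nf
  have hint : ∫ η in δ..b, η ^ (-D - 1) ≤ δ ^ (-D) / D := by
    rw [integral_rpow_of_pos hδ hδb (by linarith), sub_add_cancel, div_neg, ← neg_div, neg_sub]
    gcongr
    linarith [rpow_nonneg (hδ.trans_le hδb).le (-D)]
  calc (∫ η in δ..b, (η ^ (-(1 + α))) ^ q) ^ (1 / q)
      ≤ (δ ^ (-D) / D) ^ (1 / q) := by
        rw [hrw]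
        exact rpow_le_rpow (intervalIntegral.integral_nonneg hδb fun _ hη =>
          rpow_nonneg (hδ.le.trans hη.1) _) hint (one_div_pos.2 (by linarith)).le
    _ = δ ^ (-(α + 1 / p)) / D ^ (1 / q) := by
        rw [div_rpow (rpow_nonneg hδ.le _) hD.le, ← rpow_mul hδ.le]
        have hpq' : 1 / q = 1 - 1 / p := by
          rw [one_div, one_div]; linarith [hpq.inv_add_inv_eq_one]
        have : -D * (1 / q) = -(1 + α) + 1 / q := by
          rw [hD_def]; field_simp [hpq.symm.ne_zero]; ring
        rw [this, hpq']
        ring_nf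

lemma integral_mul_kernel_le {v : ℝ → ℝ} {M : ℝ} (hpq : p.HolderConjugate q) (hα : 0 < α)
    (hδ : 0 < δ) (hδb : δ ≤ b) (hv : ContinuousOn v (Icc δ b)) (hv0 : ∀ η ∈ Icc δ b, 0 ≤ v η)
    (hM : (∫ η in δ..b, v η ^ p) ^ (1 / p) ≤ M) :
    ∫ η in δ..b, v η * η ^ (-(1 + α))
      ≤ M * (δ ^ (-(α + 1 / p)) / ((1 + α) * q - 1) ^ (1 / q)) :=
  (intervalIntegral_mul_le_Lp_mul_Lq_of_nonneg hδb hpq hv (continuousOn_rpow_Icc hδ _) hv0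
    fun _ hη => rpow_nonneg (hδ.le.trans hη.1) _).trans
    (mul_le_mul hM (integral_kernel_rpow_le hpq hα hδ hδb)
      (rpow_nonneg (intervalIntegral.integral_nonneg hδb fun _ hη =>
        rpow_nonneg (rpow_nonneg (hδ.le.trans hη.1) _) _) _)
      ((rpow_nonneg (intervalIntegral.integral_nonneg hδb fun η hη =>
        rpow_nonneg (hv0 η hη) _) _).trans hM))

lemma sub_le_integral_sq_sub_mul_kernel {v : ℝ → ℝ} {a M : ℝ} (hpq : p.HolderConjugate q)
    (hα : 0 < α) (hδ : 0 < δ) (hδb : δ ≤ b) (hv : ContinuousOn v (Icc δ b))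
    (hv0 : ∀ η ∈ Icc δ b, 0 ≤ v η) (hM : (∫ η in δ..b, v η ^ p) ^ (1 / p) ≤ M) (ha : 0 ≤ a) :
    a ^ 2 * ((δ ^ (-α) - b ^ (-α)) / α)
        - 2 * a * (M * (δ ^ (-(α + 1 / p)) / ((1 + α) * q - 1) ^ (1 / q)))
      ≤ ∫ η in δ..b, (a - v η) ^ 2 * η ^ (-(1 + α)) := by
  have hk := continuousOn_rpow_Icc (b := b) hδ (-(1 + α))
  have hvk : IntervalIntegrable (fun η => v η * η ^ (-(1 + α))) volume δ b :=
    (hv.mul hk).intervalIntegrable_of_Icc hδb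
  have hkernel : ∫ η in δ..b, η ^ (-(1 + α)) = (δ ^ (-α) - b ^ (-α)) / α := by
    rw [integral_rpow_of_pos hδ hδb (by linarith), show -(1 + α) + 1 = -α by ring, div_neg,
      ← neg_div, neg_sub]
  have hsplit : ∫ η in δ..b, (a ^ 2 * η ^ (-(1 + α)) - 2 * a * (v η * η ^ (-(1 + α))))
      = a ^ 2 * ((δ ^ (-α) - b ^ (-α)) / α) - 2 * a * ∫ η in δ..b, v η * η ^ (-(1 + α)) := by
    rw [intervalIntegral.integral_sub ((hk.intervalIntegrable_of_Icc hδb).const_mul _)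
      (hvk.const_mul _), intervalIntegral.integral_const_mul, intervalIntegral.integral_const_mul,
      hkernel]
  calc a ^ 2 * ((δ ^ (-α) - b ^ (-α)) / α)
        - 2 * a * (M * (δ ^ (-(α + 1 / p)) / ((1 + α) * q - 1) ^ (1 / q)))
      ≤ a ^ 2 * ((δ ^ (-α) - b ^ (-α)) / α) - 2 * a * ∫ η in δ..b, v η * η ^ (-(1 + α)) := by
        gcongr
        exact integral_mul_kernel_le hpq hα hδ hδb hv hv0 hM
    _ ≤ ∫ η in δ..b, (a - v η) ^ 2 * η ^ (-(1 + α)) := by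
        rw [← hsplit]
        refine intervalIntegral.integral_mono_on hδb
          (((hk.intervalIntegrable_of_Icc hδb).const_mul _).sub (hvk.const_mul _))
          ((((continuousOn_const.sub hv).pow 2).mul hk).intervalIntegrable_of_Icc hδb)
          fun η hη => ?_
        have := mul_nonneg (sq_nonneg (v η)) (rpow_nonneg (hδ.le.trans hη.1) (-(1 + α)))
        nlinarith

end Truncation

lemma ofReal_mul_integral_le_IfracE {α δ : ℝ} {u : ℝ → ℝ} (hα : 0 < α) (hu : Continuous u)
    (hδ : 0 < δ) (hδπ : δ ≤ π) (x : ℝ) :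
    ENNReal.ofReal (cFrac α * ∫ η in δ..π, (u x - u (x - η)) ^ 2 * η ^ (-(1 + α)))
      ≤ IfracE α u x := by
  have hcont : ContinuousOn (fun η => (u x - u (x - η)) ^ 2 * η ^ (-(1 + α))) (Icc δ π) :=
    ((continuous_const.sub (hu.comp (continuous_sub_left x))).pow 2).continuousOn.mul
      (continuousOn_rpow_Icc hδ _)
  have hnonneg : ∀ η ∈ Ioc δ π, 0 ≤ (u x - u (x - η)) ^ 2 * η ^ (-(1 + α)) := fun η hη =>
    mul_nonneg (sq_nonneg _) (rpow_nonneg (hδ.trans hη.1).le _)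
  rw [ENNReal.ofReal_mul' (intervalIntegral.integral_nonneg hδπ fun η hη =>
      mul_nonneg (sq_nonneg _) (rpow_nonneg (hδ.le.trans hη.1) _)),
    intervalIntegral.integral_of_le hδπ, ofReal_integral_eq_lintegral_ofReal
      (hcont.integrableOn_Icc.mono_set Ioc_subset_Icc_self)
      (ae_restrict_of_forall_mem measurableSet_Ioc hnonneg)]
  refine mul_le_mul_right ?_ _
  have hK : ∀ η ∈ Ioc δ π, η ^ (-(1 + α)) ≤ Kper α η := fun η hη => by
    simpa [abs_of_pos (hδ.trans hη.1)] using abs_rpow_neg_le_Kper hα η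
  calc ∫⁻ η in Ioc δ π, ENNReal.ofReal ((u x - u (x - η)) ^ 2 * η ^ (-(1 + α)))
      ≤ ∫⁻ η in Ioc δ π, ENNReal.ofReal ((u x - u (x - η)) ^ 2 * Kper α η) :=
        setLIntegral_mono' measurableSet_Ioc fun η hη => ENNReal.ofReal_le_ofReal <|
          mul_le_mul_of_nonneg_left (hK η hη) (sq_nonneg _)
    _ ≤ ∫⁻ η in Ioc (-π) π, ENNReal.ofReal ((u x - u (x - η)) ^ 2 * Kper α η) :=
        lintegral_mono_set (Ioc_subset_Ioc_left (by linarith [pi_pos]))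

lemma integral_comp_sub_rpow_le {u : ℝ → ℝ} {p δ : ℝ} (hu : Continuous u)
    (hper : u.Periodic (2 * π)) (hu0 : ∀ y, 0 ≤ u y) (hp : 0 ≤ p) (hδ : -π ≤ δ) (hδπ : δ ≤ π)
    (x : ℝ) : ∫ η in δ..π, u (x - η) ^ p ≤ ∫ y in -π..π, |u y| ^ p := by
  have hcont : Continuous fun η => u (x - η) ^ p :=
    (hu.comp (continuous_sub_left x)).rpow_const fun _ => Or.inr hp
  calc ∫ η in δ..π, u (x - η) ^ p ≤ ∫ η in -π..π, u (x - η) ^ p :=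
        intervalIntegral.integral_mono_interval hδ hδπ le_rfl
          (ae_of_all _ fun η => rpow_nonneg (hu0 _) _) (hcont.intervalIntegrable _ _)
    _ = ∫ y in -π..π, |u y| ^ p := by
        have h := (hper.comp fun y => y ^ p).intervalIntegral_comp_sub_eq (-π) x
        rw [show -π + 2 * π = π by ring] at h
        simp only [Function.comp_def] at h
        simp_rw [h, abs_of_nonneg (hu0 _)]

lemma eventually_cube_le_truncated_bound {α p γ c L b : ℝ} (hα : 0 < α) (hp : 0 < p)
    (hpα : 1 < p * α) (hγ : 0 < γ) (hc : 0 < c) (hL : 0 < L) (hb : 0 < b) :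
    ∀ᶠ a in atTop, ∃ δ, 0 < δ ∧ δ ≤ b ∧
      γ * a ^ 3
        ≤ c * (a ^ 2 * ((δ ^ (-α) - b ^ (-α)) / α) - 2 * a * (L * δ ^ (-(α + 1 / p)))) := by
  set E := 8 * α * L with hE_def
  have hE : 0 < E := by positivity
  have hscale := tendsto_id.atTop_div_const (r := E) hE
  have hX := (tendsto_rpow_atTop (y := p * α) (by linarith)).comp hscale
  have hY := (tendsto_rpow_atTop (y := p * α - 1) (by linarith)).comp hscale
  filter_upwards [eventually_gt_atTop 0, hX.eventually_ge_atTop (2 * b ^ (-α)),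
    hY.eventually_ge_atTop (4 * α * γ * E / c)] with a ha hX hY
  simp only [Function.comp_apply, id] at hX hY
  have ht : 0 < a / E := div_pos ha hE
  have hδ : 0 < (E / a) ^ p := rpow_pos_of_pos (div_pos hE ha) p
  -- `δ = (E / a) ^ p` is the scale at which the cross term is a quarter of the main term.
  set X := (a / E) ^ (p * α) with hX_def
  have hδα : ((E / a) ^ p) ^ (-α) = X := by
    rw [← rpow_mul (div_pos hE ha).le, show p * -α = -(p * α) by ring,
      rpow_neg (div_pos hE ha).le, ← inv_rpow (div_pos hE ha).le, inv_div]
  have hδp : ((E / a) ^ p) ^ (-(α + 1 / p)) = X * (a / E) := by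
    rw [← rpow_mul (div_pos hE ha).le, show p * -(α + 1 / p) = -(p * α + 1) by field_simp,
      rpow_neg (div_pos hE ha).le, ← inv_rpow (div_pos hE ha).le, inv_div, rpow_add_one ht.ne']
  have hcX : 4 * α * γ * a ≤ c * X := by
    rw [rpow_sub_one ht.ne', le_div_iff₀ ht, div_mul_div_comm, div_le_iff₀ (by positivity)] at hY
    have : 4 * α * γ * a * (c * E) ≤ c * X * (c * E) := by nlinarith
    exact le_of_mul_le_mul_right this (by positivity)
  have hB : b ^ (-α) ≤ X := by linarith [rpow_pos_of_pos hb (-α)]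
  refine ⟨(E / a) ^ p, hδ, (rpow_le_rpow_iff_of_neg hb hδ (by linarith)).1 (hδα ▸ hB), ?_⟩
  rw [hδα, hδp]
  have hsplit : c * (a ^ 2 * ((X - b ^ (-α)) / α) - 2 * a * (L * (X * (a / E))))
      = a ^ 2 / (4 * α) * (c * X) + c * a ^ 2 / (2 * α) * (X - 2 * b ^ (-α)) := by
    rw [hE_def]; field_simp; ring
  calc γ * a ^ 3 = a ^ 2 / (4 * α) * (4 * α * γ * a) := by field_simp
    _ ≤ a ^ 2 / (4 * α) * (c * X) := by gcongr
    _ ≤ c * (a ^ 2 * ((X - b ^ (-α)) / α) - 2 * a * (L * (X * (a / E)))) := by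
        rw [hsplit]
        exact le_add_of_nonneg_right (mul_nonneg (by positivity) (by linarith))

lemma exists_cube_le_IfracE {α p γ M : ℝ} (hα0 : 0 < α) (hα2 : α < 2) (hp : 1 < p)
    (hpα : 1 < p * α) (hγ : 0 < γ) (hM : 0 < M) :
    ∃ T, ∀ u : ℝ → ℝ, Continuous u → u.Periodic (2 * π) → (∀ y, 0 ≤ u y) →
      (∫ y in -π..π, |u y| ^ p) ^ (1 / p) ≤ M →
      ∀ x, T ≤ u x → ENNReal.ofReal (γ * u x ^ 3) ≤ IfracE α u x := by
  have hpq : p.HolderConjugate p.conjExponent := .conjExponent hp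
  have hK : 0 < ((1 + α) * p.conjExponent - 1) ^ (1 / p.conjExponent) :=
    rpow_pos_of_pos (by nlinarith [hpq.symm.lt]) _
  obtain ⟨T, hT⟩ := eventually_atTop.1 <| eventually_cube_le_truncated_bound hα0 (by linarith)
    hpα hγ (cFrac_pos_s13 hα0 hα2) (div_pos hM hK) pi_pos
  refine ⟨T, fun u hu hper hu0 hMb x hx => ?_⟩
  obtain ⟨δ, hδ, hδπ, hcube⟩ := hT (u x) hx
  rw [div_mul_eq_mul_div, mul_div_assoc] at hcube
  have hLp : (∫ η in δ..π, u (x - η) ^ p) ^ (1 / p) ≤ M :=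
    (rpow_le_rpow (intervalIntegral.integral_nonneg hδπ fun _ _ => rpow_nonneg (hu0 _) _)
      (integral_comp_sub_rpow_le hu hper hu0 (by linarith) (by linarith [pi_pos]) hδπ x)
      (by positivity)).trans hMb
  calc ENNReal.ofReal (γ * u x ^ 3)
      ≤ ENNReal.ofReal (cFrac α * ∫ η in δ..π, (u x - u (x - η)) ^ 2 * η ^ (-(1 + α))) :=
        ENNReal.ofReal_le_ofReal <| hcube.trans <| mul_le_mul_of_nonneg_left
          (sub_le_integral_sq_sub_mul_kernel hpq hα0 hδ hδπ
            (hu.comp (continuous_sub_left x)).continuousOn (fun _ _ => hu0 _) hLp (hu0 x))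
          (cFrac_pos_s13 hα0 hα2).le
    _ ≤ IfracE α u x := ofReal_mul_integral_le_IfracE hα0 hu hδ hδπ x

theorem stmt13 (α s : ℝ) (hα0 : 0 < α) (hα2 : α < 2) (hs0 : 0 < s)
    (hcrit : 1 - α < s / (2 * (s + 1))) :
    (1 + α - s / (2 * (s + 1))) / α < 3 ∧
    ∀ γ N M : ℝ, 0 < γ → 0 < N → 0 < M →
      ∃ C : ℝ, 0 < C ∧
        ∀ u : ℝ → ℝ, Continuous u → Function.Periodic u (2 * Real.pi) →
          (∀ x, 0 ≤ u x) →
          (∫ x in (-Real.pi)..Real.pi, u x) ≤ N →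
          (∫ x in (-Real.pi)..Real.pi, |u x| ^ (1 + s)) ^ (1 / (1 + s)) ≤ M →
          ∀ x : ℝ,
            ENNReal.ofReal (γ * u x ^ 3
                - C * (u x ^ ((1 + α - s / (2 * (s + 1))) / α) + u x + 1))
              ≤ IfracE α u x := by
  have hlt_half : s / (2 * (s + 1)) < 1 / 2 := by
    rw [div_lt_iff₀ (by positivity)]; linarith
  refine ⟨by rw [div_lt_iff₀ hα0]; linarith, fun γ N M hγ _ hM => ?_⟩
  have hpα : 1 < (1 + s) * α := by
    have : (1 + s) * (s / (2 * (s + 1))) = s / 2 := by field_simp; ring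
    nlinarith [mul_lt_mul_of_pos_left hcrit (by linarith : 0 < 1 + s)]
  obtain ⟨T, hT⟩ := exists_cube_le_IfracE hα0 hα2 (by linarith) hpα hγ hM
  have hC : 0 < γ * |T| ^ 3 + 1 := by positivity
  refine ⟨γ * |T| ^ 3 + 1, hC, fun u hu hper hu0 _ hMb x => ?_⟩
  have hR : 1 ≤ u x ^ ((1 + α - s / (2 * (s + 1))) / α) + u x + 1 := by
    linarith [rpow_nonneg (hu0 x) ((1 + α - s / (2 * (s + 1))) / α), hu0 x]
  have hCR := le_mul_of_one_le_right hC.le hR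
  rcases le_or_gt T (u x) with hlarge | hsmall
  · refine (ENNReal.ofReal_le_ofReal ?_).trans (hT u hu hper hu0 hMb x hlarge)
    linarith
  · have hcube : u x ^ 3 ≤ |T| ^ 3 := pow_le_pow_left₀ (hu0 x) (hsmall.le.trans (le_abs_self T)) 3
    rw [ENNReal.ofReal_eq_zero.2 (by nlinarith)]
    exact bot_le
end
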